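/- Let 1 ≤ p < ∞ and f ∈ L^p(G_m). If ‖σ_{M_n} f − f‖_p = o(1/M_n) as n → ∞, then f is almost everywhere equal to a constant. -/

import Mathlib

noncomputable section
open MeasureTheory Finset Filter

namespace VilPaper

instance (n : ℕ) : TopologicalSpace (ZMod n) := ⊥
instance (n : ℕ) : DiscreteTopology (ZMod n) := ⟨rfl⟩

variable (m : ℕ → ℕ)

abbrev mseq (k : ℕ) : ℕ := m k + 2
abbrev G := ∀ k, ZMod (mseq m k)

instance : IsTopologicalAddGroup (G m) := by infer_instance
instance : CompactSpace (G m) := by infer_instance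
instance : MeasurableSpace (G m) := borel _
instance : BorelSpace (G m) := ⟨rfl⟩

def μV : Measure (G m) := Measure.addHaarMeasure ⊤

/-- The generalized number system: `M_0 = 1`, `M_{k+1} = m_k M_k`. -/
def Mgen : ℕ → ℕ
  | 0 => 1
  | k + 1 => mseq m k * Mgen k

/-- The cylinder sets `I_n(x)`. -/
def cyl (n : ℕ) (x : G m) : Set (G m) := {y | ∀ i < n, y i = x i}

/-- `I_n := I_n(0)`. -/
def Icyl (n : ℕ) : Set (G m) := cyl m n 0

/-- Generalized Rademacher functions `r_k(x) = exp(2πi x_k / m_k)`. -/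
def rad (k : ℕ) (x : G m) : ℂ :=
  Complex.exp (2 * Real.pi * Complex.I * ((x k).val : ℂ) / (mseq m k : ℂ))

/-- The `j`-th digit `n_j` of `n` in the number system `(M_k)`. -/
def digit (n j : ℕ) : ℕ := n / Mgen m j % mseq m j

/-- `|n| = max { j : n_j ≠ 0 }`. -/
def ndeg (n : ℕ) : ℕ := sSup {j | digit m n j ≠ 0}

/-- The Vilenkin system `ψ_n = ∏ r_k^{n_k}`. -/
def psi (n : ℕ) (x : G m) : ℂ := ∏ k ∈ Finset.range (n + 1), rad m k x ^ digit m n k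

/-- Dirichlet kernels `D_n = ∑_{k<n} ψ_k`. -/
def Dker (n : ℕ) (x : G m) : ℂ := ∑ k ∈ Finset.range n, psi m k x

/-- Fejér kernels `K_n = (1/n) ∑_{k=1}^n D_k`. -/
def Kker (n : ℕ) (x : G m) : ℂ := (n : ℂ)⁻¹ * ∑ k ∈ Finset.range n, Dker m (k + 1) x

/-- Vilenkin–Fourier coefficients. -/
def fcoef (f : G m → ℂ) (k : ℕ) : ℂ := ∫ x, f x * (starRingEnd ℂ) (psi m k x) ∂ μV m

/-- Partial sums `S_n f` of the Vilenkin–Fourier series. -/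
def partialSum (f : G m → ℂ) (n : ℕ) (x : G m) : ℂ :=
  ∑ k ∈ Finset.range n, fcoef m f k * psi m k x

/-- Fejér means `σ_n f = (1/n) ∑_{k=1}^n S_k f`. -/
def fejer (f : G m → ℂ) (n : ℕ) (x : G m) : ℂ :=
  (n : ℂ)⁻¹ * ∑ k ∈ Finset.range n, partialSum m f (k + 1) x

/-- `Q_n = ∑_{k<n} q_k`. -/
def Qsum (q : ℕ → ℝ) (n : ℕ) : ℝ := ∑ k ∈ Finset.range n, q k

/-- The `T` means `T_n f = (1/Q_n) ∑_{k<n} q_k S_k f`. -/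
def Tmean (q : ℕ → ℝ) (f : G m → ℂ) (n : ℕ) (x : G m) : ℂ :=
  (Qsum q n : ℂ)⁻¹ * ∑ k ∈ Finset.range n, (q k : ℂ) * partialSum m f k x

/-- Convolution on `G_m`. -/
def conv (f g : G m → ℂ) (x : G m) : ℂ := ∫ t, f t * g (x - t) ∂ μV m

/-- The modulus of continuity `ω_p(δ, f) = sup_{t ∈ I_s, 1/M_s < δ} ‖f(·-t) - f‖_p`. -/
def omega (p : ENNReal) (f : G m → ℂ) (δ : ℝ) : ENNReal :=
  ⨆ (s : ℕ) (_ : (1 : ℝ) / (Mgen m s : ℝ) < δ) (t : G m) (_ : t ∈ Icyl m s),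
    eLpNorm (fun x => f (x - t) - f x) p (μV m)

/-- The Lipschitz class `Lip(α, p)`. -/
def LipClass (p : ENNReal) (α : ℝ) (f : G m → ℂ) : Prop :=
  MemLp f p (μV m) ∧ ∃ C : ℝ, ∀ δ : ℝ, 0 < δ → omega m p f δ ≤ ENNReal.ofReal (C * δ ^ α)

/-! The Vilenkin functions are distinct characters of `G_m`, hence orthonormal, so for `j < n`
the `j`-th coefficient of `σ_n f - f` is `-(j / n) f̂(j)`; it is bounded by
`‖σ_n f - f‖_1 ≤ ‖σ_n f - f‖_p`. Taking `n = M_k` the hypothesis gives `j ‖f̂(j)‖ ≤ ε` for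
every `ε > 0`, so `f̂` vanishes off `0`. Then `σ_{M_k} f` is the constant `f̂(0)`, and
`‖f̂(0) - f‖_p = o(1 / M_k)` forces `f = f̂(0)` almost everywhere. -/

theorem Mgen_pos (k : ℕ) : 0 < Mgen m k := by
  induction k with
  | zero => simp [Mgen]
  | succ k ih => rw [Mgen]; positivity

theorem two_pow_le_Mgen (k : ℕ) : 2 ^ k ≤ Mgen m k := by
  induction k with
  | zero => simp [Mgen]
  | succ k ih =>
    rw [Mgen, pow_succ']
    exact Nat.mul_le_mul (by simp [mseq]) ih

theorem lt_Mgen (k : ℕ) : k < Mgen m k :=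
  k.lt_two_pow_self.trans_le (two_pow_le_Mgen m k)

theorem digit_eq_zero_of_lt {n k : ℕ} (h : n < Mgen m k) : digit m n k = 0 := by
  rw [digit, Nat.div_eq_of_lt h, Nat.zero_mod]

theorem digit_lt (n k : ℕ) : digit m n k < mseq m k := Nat.mod_lt _ (by positivity)

theorem mod_Mgen_succ (n k : ℕ) :
    n % Mgen m (k + 1) = n % Mgen m k + Mgen m k * digit m n k := by
  rw [Mgen, mul_comm, Nat.mod_mul, digit]

theorem digit_injective {a b : ℕ} (h : ∀ k, digit m a k = digit m b k) : a = b := by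
  have hmod : ∀ k, a % Mgen m k = b % Mgen m k := by
    intro k
    induction k with
    | zero => simp only [Mgen, Nat.mod_one]
    | succ k ih => rw [mod_Mgen_succ, mod_Mgen_succ, ih, h]
  have hlt : ∀ n, n ≤ max a b → n < Mgen m (max a b) := fun n hn =>
    hn.trans_lt (lt_Mgen m _)
  calc a = a % Mgen m (max a b) := (Nat.mod_eq_of_lt (hlt a (le_max_left a b))).symm
    _ = b % Mgen m (max a b) := hmod _
    _ = b := Nat.mod_eq_of_lt (hlt b (le_max_right a b))

theorem rad_eq_stdAddChar (k : ℕ) (x : G m) : rad m k x = ZMod.stdAddChar (x k) := by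
  rw [ZMod.stdAddChar_apply, ZMod.toCircle_apply, rad]

theorem norm_rad (k : ℕ) (x : G m) : ‖rad m k x‖ = 1 := by
  rw [rad_eq_stdAddChar, ZMod.stdAddChar_apply, Circle.norm_coe]

theorem rad_add (k : ℕ) (x y : G m) : rad m k (x + y) = rad m k x * rad m k y := by
  simp only [rad_eq_stdAddChar, Pi.add_apply, AddChar.map_add_eq_mul]

theorem psi_add (n : ℕ) (x y : G m) : psi m n (x + y) = psi m n x * psi m n y := by
  simp only [psi, rad_add, mul_pow, Finset.prod_mul_distrib]

theorem norm_psi (n : ℕ) (x : G m) : ‖psi m n x‖ = 1 := by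
  simp [psi, norm_prod, norm_rad]

theorem psi_mul_conj_self (n : ℕ) (x : G m) : psi m n x * starRingEnd ℂ (psi m n x) = 1 := by
  rw [Complex.mul_conj, Complex.normSq_eq_norm_sq, norm_psi]
  simp

theorem psi_zero (x : G m) : psi m 0 x = 1 := by
  simp [psi, digit]

theorem continuous_psi (n : ℕ) : Continuous (psi m n) := by
  unfold psi rad
  fun_prop

theorem psi_single (n i : ℕ) :
    psi m n (Pi.single i 1) = ZMod.stdAddChar (digit m n i : ZMod (mseq m i)) := by
  have hrad : ∀ k, rad m k (Pi.single i 1) ^ digit m n k =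
      if k = i then ZMod.stdAddChar (digit m n i : ZMod (mseq m i)) else 1 := by
    intro k
    rcases eq_or_ne k i with rfl | hki
    · rw [if_pos rfl, rad_eq_stdAddChar, Pi.single_eq_same, ← AddChar.map_nsmul_eq_pow,
        nsmul_one]
    · rw [if_neg hki, rad_eq_stdAddChar, Pi.single_eq_of_ne hki, AddChar.map_zero_eq_one,
        one_pow]
  rw [psi, Finset.prod_congr rfl fun k _ => hrad k, Finset.prod_ite_eq']
  split_ifs with hi
  · rfl
  · have hni : n < i := by simp only [Finset.mem_range, not_lt] at hi; omega
    rw [digit_eq_zero_of_lt m (hni.trans (lt_Mgen m i)),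
      Nat.cast_zero, AddChar.map_zero_eq_one]

instance : IsProbabilityMeasure (μV m) := by
  constructor
  rw [μV, ← TopologicalSpace.PositiveCompacts.coe_top]
  exact Measure.addHaarMeasure_self

instance : (μV m).IsAddLeftInvariant := by unfold μV; infer_instance

theorem integral_eq_zero_of_map_add_eq_mul {H : Type*} [AddGroup H] [MeasurableSpace H]
    [MeasurableAdd H] (μ : Measure H) [μ.IsAddLeftInvariant] {χ : H → ℂ}
    (hχ : ∀ t x, χ (t + x) = χ t * χ x) {t : H} (ht : χ t ≠ 1) : ∫ x, χ x ∂μ = 0 := by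
  have hinv : ∫ x, χ x ∂μ = χ t * ∫ x, χ x ∂μ := by
    conv_lhs => rw [← integral_add_left_eq_self χ t]
    simp_rw [hχ, integral_const_mul]
  have : (χ t - 1) * ∫ x, χ x ∂μ = 0 := by linear_combination -hinv
  exact (mul_eq_zero.mp this).resolve_left (sub_ne_zero.mpr ht)

theorem fcoef_psi (K J : ℕ) : fcoef m (psi m K) J = if K = J then 1 else 0 := by
  unfold fcoef
  rcases eq_or_ne K J with rfl | hKJ
  · simp [psi_mul_conj_self]
  rw [if_neg hKJ]
  obtain ⟨i, hi⟩ : ∃ i, digit m K i ≠ digit m J i := by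
    by_contra! h
    exact hKJ (digit_injective m h)
  refine integral_eq_zero_of_map_add_eq_mul _ (t := Pi.single i 1)
    (fun x y => by simp only [psi_add, map_mul]; ring) fun h => hi ?_
  have hKJi : psi m K (Pi.single i 1) = psi m J (Pi.single i 1) := by
    linear_combination psi m J (Pi.single i 1) * h
      - psi m K (Pi.single i 1) * psi_mul_conj_self m J (Pi.single i 1)
  rwa [psi_single, psi_single, ZMod.injective_stdAddChar.eq_iff,
    ZMod.natCast_eq_natCast_iff', Nat.mod_eq_of_lt (digit_lt m K i),
    Nat.mod_eq_of_lt (digit_lt m J i)] at hKJi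

theorem integrable_of_continuous {g : G m → ℂ} (hg : Continuous g) : Integrable g (μV m) :=
  hg.integrable_of_hasCompactSupport (HasCompactSupport.of_compactSpace g)

theorem integrable_mul_conj_psi {g : G m → ℂ} (hg : Integrable g (μV m)) (j : ℕ) :
    Integrable (fun x => g x * starRingEnd ℂ (psi m j x)) (μV m) := by
  refine hg.mul_bdd (c := 1) ((continuous_psi m j).star).aestronglyMeasurable
    (Eventually.of_forall fun x => ?_)
  rw [RCLike.norm_conj, norm_psi]

theorem fcoef_sub {f g : G m → ℂ} (hf : Integrable f (μV m)) (hg : Integrable g (μV m))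
    (j : ℕ) : fcoef m (fun x => f x - g x) j = fcoef m f j - fcoef m g j := by
  simp only [fcoef, sub_mul]
  exact integral_sub (integrable_mul_conj_psi m hf j) (integrable_mul_conj_psi m hg j)

theorem fcoef_const_mul (c : ℂ) (g : G m → ℂ) (j : ℕ) :
    fcoef m (fun x => c * g x) j = c * fcoef m g j := by
  simp only [fcoef, mul_assoc, integral_const_mul]

theorem fcoef_sum {ι : Type*} (s : Finset ι) {g : ι → G m → ℂ}
    (hg : ∀ i ∈ s, Integrable (g i) (μV m)) (j : ℕ) :
    fcoef m (fun x => ∑ i ∈ s, g i x) j = ∑ i ∈ s, fcoef m (g i) j := by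
  simp only [fcoef, Finset.sum_mul]
  exact integral_finsetSum s fun i hi => integrable_mul_conj_psi m (hg i hi) j

theorem continuous_partialSum (f : G m → ℂ) (k : ℕ) : Continuous (partialSum m f k) := by
  unfold partialSum
  exact continuous_finsetSum _ fun i _ => continuous_const.mul (continuous_psi m i)

theorem fcoef_partialSum (f : G m → ℂ) (k j : ℕ) :
    fcoef m (partialSum m f k) j = if j < k then fcoef m f j else 0 := by
  unfold partialSum
  rw [fcoef_sum m _ fun i _ => (integrable_of_continuous m (continuous_psi m i)).const_mul _]
  simp only [fcoef_const_mul, fcoef_psi, mul_ite, mul_one, mul_zero, Finset.sum_ite_eq',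
    Finset.mem_range]

theorem integrable_fejer (f : G m → ℂ) (n : ℕ) : Integrable (fejer m f n) (μV m) :=
  integrable_of_continuous m <| continuous_const.mul <|
    continuous_finsetSum _ fun k _ => continuous_partialSum m f (k + 1)

theorem fcoef_fejer (f : G m → ℂ) {n j : ℕ} (hj : j < n) :
    fcoef m (fejer m f n) j = (1 - j / n) * fcoef m f j := by
  have hcount : #((Finset.range n).filter fun k => j < k + 1) = n - j := by
    rw [show (Finset.range n).filter (fun k => j < k + 1) = Finset.Ico j n by ext; simp; omega,
      Nat.card_Ico]
  have hn : (n : ℂ) ≠ 0 := Nat.cast_ne_zero.mpr (by omega)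
  unfold fejer
  rw [fcoef_const_mul, fcoef_sum m _ fun k _ =>
    integrable_of_continuous m (continuous_partialSum m f (k + 1))]
  simp only [fcoef_partialSum, ← Finset.sum_filter, Finset.sum_const, hcount, nsmul_eq_mul,
    Nat.cast_sub hj.le]
  field_simp

theorem enorm_fcoef_le_eLpNorm {g : G m → ℂ} (hg : AEStronglyMeasurable g (μV m)) {p : ENNReal}
    (hp : 1 ≤ p) (j : ℕ) : ‖fcoef m g j‖ₑ ≤ eLpNorm g p (μV m) := by
  calc ‖fcoef m g j‖ₑ ≤ ∫⁻ x, ‖g x * starRingEnd ℂ (psi m j x)‖ₑ ∂μV m :=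
        enorm_integral_le_lintegral_enorm _
    _ = eLpNorm g 1 (μV m) := by
        rw [eLpNorm_one_eq_lintegral_enorm]
        refine lintegral_congr fun x => ?_
        rw [enorm_mul, ← ofReal_norm (starRingEnd ℂ _), RCLike.norm_conj, norm_psi,
          ENNReal.ofReal_one, mul_one]
    _ ≤ eLpNorm g p (μV m) := eLpNorm_le_eLpNorm_of_exponent_le hp hg

theorem fejer_eq_fcoef_zero (f : G m → ℂ) (hf : ∀ j ≠ 0, fcoef m f j = 0) {n : ℕ} (hn : n ≠ 0)
    (x : G m) : fejer m f n x = fcoef m f 0 := by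
  have hS : ∀ k, partialSum m f (k + 1) x = fcoef m f 0 := fun k => by
    rw [partialSum, Finset.sum_eq_single 0 (fun i _ hi => by rw [hf i hi, zero_mul])
      (by simp), psi_zero, mul_one]
  simp only [fejer, hS, Finset.sum_const, Finset.card_range, nsmul_eq_mul]
  field_simp

theorem mul_norm_fcoef_le_of_eLpNorm_fejer_sub_le {p : ENNReal} (hp : 1 ≤ p) {f : G m → ℂ}
    (hf : MemLp f p (μV m)) {n j : ℕ} (hj : j < n) {ε : ℝ} (hε : 0 ≤ ε)
    (h : eLpNorm (fun x => fejer m f n x - f x) p (μV m) ≤ ENNReal.ofReal (ε / n)) :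
    j * ‖fcoef m f j‖ ≤ ε := by
  have hn : (0 : ℝ) < n := by exact_mod_cast (Nat.zero_le j).trans_lt hj
  have hcoef : fcoef m (fun x => fejer m f n x - f x) j = -(j / n) * fcoef m f j := by
    rw [fcoef_sub m (integrable_fejer m f n) (hf.integrable hp), fcoef_fejer m f hj]
    ring
  have hbound := (enorm_fcoef_le_eLpNorm m (g := fun x => fejer m f n x - f x)
    ((integrable_fejer m f n).aestronglyMeasurable.sub hf.1) hp j).trans h
  rw [hcoef, ← ofReal_norm, ENNReal.ofReal_le_ofReal_iff (by positivity), norm_mul, norm_neg,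
    norm_div, Complex.norm_natCast, Complex.norm_natCast, div_mul_eq_mul_div,
    div_le_div_iff_of_pos_right hn] at hbound
  exact hbound

theorem fcoef_eq_zero_of_fejer_sub_little_o {p : ENNReal} (hp : 1 ≤ p) {f : G m → ℂ}
    (hf : MemLp f p (μV m))
    (ho : ∀ ε : ℝ, 0 < ε → ∃ N : ℕ, ∀ n : ℕ, N ≤ n →
      eLpNorm (fun x => fejer m f (Mgen m n) x - f x) p (μV m) ≤
        ENNReal.ofReal (ε / (Mgen m n : ℝ)))
    {j : ℕ} (hj : j ≠ 0) : fcoef m f j = 0 := by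
  have hsmall : ∀ ε : ℝ, 0 < ε → j * ‖fcoef m f j‖ ≤ 0 + ε := fun ε hε => by
    obtain ⟨N, hN⟩ := ho ε hε
    rw [zero_add]
    exact mul_norm_fcoef_le_of_eLpNorm_fejer_sub_le m hp hf
      ((le_max_right N j).trans_lt (lt_Mgen m _)) hε.le (hN _ (le_max_left N j))
  have hj' : (0 : ℝ) < j := by positivity
  exact norm_le_zero_iff.mp (nonpos_of_mul_nonpos_right (le_of_forall_pos_le_add hsmall) hj')

theorem fejer_little_o_constant_general (m : ℕ → ℕ)
    (p : ENNReal) (hp1 : 1 ≤ p)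
    (f : G m → ℂ) (hf : MemLp f p (μV m))
    (ho : ∀ ε : ℝ, 0 < ε → ∃ N : ℕ, ∀ n : ℕ, N ≤ n →
      eLpNorm (fun x => fejer m f (Mgen m n) x - f x) p (μV m) ≤
        ENNReal.ofReal (ε / (Mgen m n : ℝ))) :
    ∃ c : ℂ, f =ᵐ[μV m] fun _ => c := by
  have hcoef : ∀ j ≠ 0, fcoef m f j = 0 := fun j hj =>
    fcoef_eq_zero_of_fejer_sub_little_o m hp1 hf ho hj
  refine ⟨fcoef m f 0, ?_⟩
  have hsmall : ∀ ε : ℝ, 0 < ε →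
      eLpNorm (fun x => fcoef m f 0 - f x) p (μV m) ≤ ENNReal.ofReal ε := by
    intro ε hε
    obtain ⟨N, hN⟩ := ho ε hε
    have hM : (1 : ℝ) ≤ Mgen m N := by exact_mod_cast Mgen_pos m N
    have hN' := hN N le_rfl
    simp only [fejer_eq_fcoef_zero m f hcoef (Mgen_pos m N).ne'] at hN'
    exact hN'.trans (ENNReal.ofReal_le_ofReal (div_le_self hε.le hM))
  have hzero : eLpNorm (fun x => fcoef m f 0 - f x) p (μV m) = 0 :=
    nonpos_iff_eq_zero.mp <| ENNReal.le_of_forall_pos_le_add fun ε hε _ => by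
      simpa using hsmall ε hε
  filter_upwards [(eLpNorm_eq_zero_iff (aestronglyMeasurable_const.sub hf.1)
    (by positivity)).mp hzero] with x hx
  exact (sub_eq_zero.mp hx).symm

/-- `‖σ_{M_n} f - f‖_p = o(1/M_n)` forces `f` to be a.e. constant. -/
theorem fejer_little_o_constant (m : ℕ → ℕ) (R : ℕ) (hR : ∀ k, mseq m k ≤ R)
    (p : ENNReal) (hp1 : 1 ≤ p) (hp2 : p ≠ ⊤)
    (f : G m → ℂ) (hf : MemLp f p (μV m))
    (ho : ∀ ε : ℝ, 0 < ε → ∃ N : ℕ, ∀ n : ℕ, N ≤ n →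
      eLpNorm (fun x => fejer m f (Mgen m n) x - f x) p (μV m) ≤
        ENNReal.ofReal (ε / (Mgen m n : ℝ))) :
    ∃ c : ℂ, f =ᵐ[μV m] fun _ => c :=
  fejer_little_o_constant_general m p hp1 f hf ho

end VilPaper
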